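/- Let A be a C*-algebra, E a Hilbert A-module, and T : E → E adjointable with adjoint T*. Let R be a modulus of T (adjointable, R* = R, ⟨Rx,x⟩ ≥ 0 for all x, R∘R = T*∘T) and R′ a modulus of T* (adjointable, R′* = R′, ⟨R′x,x⟩ ≥ 0 for all x, R′∘R′ = T∘T*). Suppose there is an adjointable W : E → E with ‖W‖ ≤ 1 and adjoint W* satisfying W∘R∘W* = R′ and W*∘R′∘W = R (these identities hold for the partial isometry in the polar decomposition of T whenever E = ker T ⊕ closure(ran T*) = ker T* ⊕ closure(ran T)). Then π̃₁(T) = π̃₁(T*), i.e. sup{ ‖Σᵢ₌₁ⁿ ⟨Rxᵢ,xᵢ⟩‖ : n ∈ ℕ, μₙ(x₁,…,xₙ) ≤ 1 } = sup{ ‖Σᵢ₌₁ⁿ ⟨R′xᵢ,xᵢ⟩‖ : n ∈ ℕ, μₙ(x₁,…,xₙ) ≤ 1 }. -/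

import Mathlib

open scoped InnerProductSpace RightActions ENNReal

noncomputable section

/-- The Mathlib (December 2024) class `CStarModule`: a Hilbert C⋆-module with a *right*
`A`-action given through `SMul Aᵐᵒᵖ E`, with `⟪x, y <• a⟫ = ⟪x, y⟫ * a`. -/
class CStarModuleRight (A : outParam <| Type*) (E : Type*) [NonUnitalSemiring A] [StarRing A] [Module ℂ A]
    [AddCommGroup E] [Module ℂ E] [PartialOrder A] [SMul Aᵐᵒᵖ E] [Norm A] [Norm E]
    extends Inner A E where
  inner_add_right {x} {y} {z} : inner x (y + z) = inner x y + inner x z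
  inner_self_nonneg {x} : 0 ≤ inner x x
  inner_self {x} : inner x x = 0 ↔ x = 0
  inner_op_smul_right {a : A} {x y : E} : inner x (y <• a) = inner x y * a
  inner_smul_right_complex {z : ℂ} {x} {y} : inner x (z • y) = z • inner x y
  star_inner x y : star (inner x y) = inner y x
  norm_eq_sqrt_norm_inner_self x : ‖x‖ = Real.sqrt ‖inner x x‖

variable {A : Type*} [NonUnitalCStarAlgebra A] [PartialOrder A] [StarOrderedRing A]
variable {E : Type*} [NormedAddCommGroup E] [NormedSpace ℂ E] [SMul Aᵐᵒᵖ E]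
  [CStarModuleRight A E] [CompleteSpace E]
variable {F : Type*} [NormedAddCommGroup F] [NormedSpace ℂ F] [SMul Aᵐᵒᵖ F]
  [CStarModuleRight A F] [CompleteSpace F]

/-- `μₙ(x₁,…,xₙ) = sup { ‖Σᵢ ⟪xᵢ, y⟫⟪y, xᵢ⟫‖^(1/2) : y ∈ E, ‖y‖ ≤ 1 }`. -/
def mu {G : Type*} [NormedAddCommGroup G] [NormedSpace ℂ G] [SMul Aᵐᵒᵖ G]
    [CStarModuleRight A G] {n : ℕ} (x : Fin n → G) : ℝ :=
  ⨆ y : {y : G // ‖y‖ ≤ 1}, Real.sqrt ‖∑ i, ⟪x i, (y : G)⟫_A * ⟪(y : G), x i⟫_A‖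

/-- `π̃₂(T) = sup { ‖Σᵢ ⟪Txᵢ, Txᵢ⟫‖^(1/2) : n ∈ ℕ, μₙ(x₁,…,xₙ) ≤ 1 }` as an element
of `[0,∞]`. -/
def piTwo {G H : Type*} [NormedAddCommGroup G] [NormedSpace ℂ G] [SMul Aᵐᵒᵖ G]
    [CStarModuleRight A G] [NormedAddCommGroup H] [NormedSpace ℂ H] [SMul Aᵐᵒᵖ H]
    [CStarModuleRight A H] (T : G → H) : ℝ≥0∞ :=
  ⨆ (n : ℕ) (x : Fin n → G) (_ : mu x ≤ 1),
    ENNReal.ofReal (Real.sqrt ‖∑ i, ⟪T (x i), T (x i)⟫_A‖)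

/-- Given (the underlying function of) a modulus `R = |T|` of an operator `T`,
`π̃₁(T) = sup { ‖Σᵢ ⟪Rxᵢ, xᵢ⟫‖ : n ∈ ℕ, μₙ(x₁,…,xₙ) ≤ 1 }` as an element of `[0,∞]`. -/
def piOne {G : Type*} [NormedAddCommGroup G] [NormedSpace ℂ G] [SMul Aᵐᵒᵖ G]
    [CStarModuleRight A G] (R : G → G) : ℝ≥0∞ :=
  ⨆ (n : ℕ) (x : Fin n → G) (_ : mu x ≤ 1),
    ENNReal.ofReal ‖∑ i, ⟪R (x i), x i⟫_A‖

/-!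
Conjugation by the contraction `W` transports the sums defining `π̃₁`: since `R = W* R' W`,
`⟪R xᵢ, xᵢ⟫ = ⟪R' (W xᵢ), W xᵢ⟫`, and `μₙ(W x₁, …, W xₙ) ≤ μₙ(x₁, …, xₙ)` because the adjoint `W*`
of a contraction is again a contraction (by the C⋆-valued Cauchy–Schwarz inequality). So
`π̃₁(T) ≤ π̃₁(T*)`, and the symmetric argument with `W*` in place of `W` gives the reverse.
-/

namespace CStarModuleRight

section general

variable {A : Type*} [NonUnitalRing A] [StarRing A] [Module ℂ A] [PartialOrder A] [Norm A]
variable {E : Type*} [AddCommGroup E] [Module ℂ E] [SMul Aᵐᵒᵖ E] [Norm E] [CStarModuleRight A E]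

lemma inner_add_left (x y z : E) : ⟪x + y, z⟫_A = ⟪x, z⟫_A + ⟪y, z⟫_A := by
  rw [← star_inner z, inner_add_right, star_add, star_inner, star_inner]

variable (A) in
def innerRightAddMonoidHom (x : E) : E →+ A :=
  AddMonoidHom.mk' (fun y => ⟪x, y⟫_A) fun _ _ => inner_add_right

lemma inner_sub_right (x y z : E) : ⟪x, y - z⟫_A = ⟪x, y⟫_A - ⟪x, z⟫_A :=
  map_sub (innerRightAddMonoidHom A x) y z

lemma inner_sub_left (x y z : E) : ⟪x - y, z⟫_A = ⟪x, z⟫_A - ⟪y, z⟫_A := by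
  rw [← star_inner z, inner_sub_right, star_sub, star_inner, star_inner]

lemma inner_zero_right (x : E) : ⟪x, 0⟫_A = 0 :=
  map_zero (innerRightAddMonoidHom A x)

lemma inner_zero_left (x : E) : ⟪0, x⟫_A = 0 := by
  rw [← star_inner x, inner_zero_right, star_zero]

lemma inner_op_smul_left (a : A) (x y : E) : ⟪x <• a, y⟫_A = star a * ⟪x, y⟫_A := by
  rw [← star_inner y, inner_op_smul_right, star_mul, star_inner]

lemma inner_smul_right_real [StarModule ℂ A] (r : ℝ) (x y : E) :
    ⟪x, r • y⟫_A = r • ⟪x, y⟫_A := by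
  rw [← Complex.coe_smul, inner_smul_right_complex, Complex.coe_smul]

lemma inner_smul_left_real [StarModule ℂ A] (r : ℝ) (x y : E) :
    ⟪r • x, y⟫_A = r • ⟪x, y⟫_A := by
  rw [← star_inner y, inner_smul_right_real, ← Complex.coe_smul, star_smul,
    Complex.star_def, Complex.conj_ofReal, Complex.coe_smul, star_inner]

variable {F : Type*} [AddCommGroup F] [Module ℂ F] [SMul Aᵐᵒᵖ F] [Norm F] [CStarModuleRight A F]

def IsAdjointPair (V : E → F) (V' : F → E) : Prop :=
  ∀ x y, ⟪V x, y⟫_A = ⟪x, V' y⟫_A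

lemma IsAdjointPair.symm {V : E → F} {V' : F → E} (h : IsAdjointPair V V') :
    IsAdjointPair V' V :=
  fun y x => by rw [← star_inner, ← h, star_inner]

end general

section norm

variable {A : Type*} [NonUnitalCStarAlgebra A] [PartialOrder A]
variable {E : Type*} [AddCommGroup E] [Module ℂ E] [SMul Aᵐᵒᵖ E] [Norm E] [CStarModuleRight A E]

variable (A) in
lemma norm_sq_eq (x : E) : ‖x‖ ^ 2 = ‖⟪x, x⟫_A‖ := by
  rw [norm_eq_sqrt_norm_inner_self (A := A) x, Real.sq_sqrt (norm_nonneg _)]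

variable [StarOrderedRing A]

lemma inner_mul_inner_swap_le (x y : E) : ⟪y, x⟫_A * ⟪x, y⟫_A ≤ ‖x‖ ^ 2 • ⟪y, y⟫_A := by
  rcases eq_or_ne x 0 with rfl | hx
  · simp only [inner_zero_left, ← star_inner (0 : E), star_zero, mul_zero]
    exact smul_nonneg (sq_nonneg _) inner_self_nonneg
  set a := ⟪x, y⟫_A
  set c := ‖x‖ ^ 2
  have hc : 0 < c := by
    have : ‖x‖ ≠ 0 := by
      rw [norm_eq_sqrt_norm_inner_self (A := A), Real.sqrt_ne_zero', norm_pos_iff]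
      exact fun h => hx (inner_self.mp h)
    positivity
  -- expand `0 ≤ ⟪x a - c y, x a - c y⟫` and bound `a* ⟪x, x⟫ a ≤ ‖⟪x, x⟫‖ a* a`
  have hsmul_le : c • (star a * a) ≤ c • (c • ⟪y, y⟫_A) := by
    have hself : (0 : A) ≤ ⟪x <• a - c • y, x <• a - c • y⟫_A := inner_self_nonneg
    have hexpand : ⟪x <• a - c • y, x <• a - c • y⟫_A
        = star a * ⟪x, x⟫_A * a - c • (star a * a) - c • (star a * a) + c • (c • ⟪y, y⟫_A) := by
      simp only [inner_sub_left, inner_sub_right, inner_op_smul_left, inner_op_smul_right,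
        inner_smul_left_real, inner_smul_right_real, sub_mul, smul_sub,
        smul_mul_assoc, mul_assoc, a, ← star_inner x y]
      abel
    have hconj : star a * ⟪x, x⟫_A * a ≤ c • (star a * a) := by
      rw [show c = ‖⟪x, x⟫_A‖ from norm_sq_eq A x]
      exact CStarAlgebra.star_left_conjugate_le_norm_smul (hb := star_inner x x)
    rw [← sub_nonneg]
    convert add_nonneg (hexpand ▸ hself) (sub_nonneg.mpr hconj) using 1
    abel
  rw [← star_inner x y]
  exact (smul_le_smul_iff_of_pos_left hc).mp hsmul_le

lemma norm_inner_le (x y : E) : ‖⟪x, y⟫_A‖ ≤ ‖x‖ * ‖y‖ := by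
  have hsq : ‖⟪x, y⟫_A‖ ^ 2 ≤ (‖x‖ * ‖y‖) ^ 2 :=
    calc ‖⟪x, y⟫_A‖ ^ 2 = ‖⟪y, x⟫_A * ⟪x, y⟫_A‖ := by
          rw [← star_inner x, CStarRing.norm_star_mul_self, pow_two]
      _ ≤ ‖‖x‖ ^ 2 • ⟪y, y⟫_A‖ := by
          refine CStarAlgebra.norm_le_norm_of_nonneg_of_le ?_ (inner_mul_inner_swap_le x y)
          rw [← star_inner x]
          exact star_mul_self_nonneg _
      _ = (‖x‖ * ‖y‖) ^ 2 := by
          rw [norm_smul, Real.norm_of_nonneg (sq_nonneg _), ← norm_sq_eq A y, mul_pow]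
  have hxy : 0 ≤ ‖x‖ * ‖y‖ := by
    rw [norm_eq_sqrt_norm_inner_self (A := A) x, norm_eq_sqrt_norm_inner_self (A := A) y]
    positivity
  exact (pow_le_pow_iff_left₀ (norm_nonneg _) hxy two_ne_zero).mp hsq

variable {F : Type*} [AddCommGroup F] [Module ℂ F] [SMul Aᵐᵒᵖ F] [Norm F] [CStarModuleRight A F]

lemma IsAdjointPair.norm_adjoint_apply_le {V : E → F} {V' : F → E} (h : IsAdjointPair V V')
    (hV : ∀ x, ‖V x‖ ≤ ‖x‖) (y : F) : ‖V' y‖ ≤ ‖y‖ := by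
  have hV'y : 0 ≤ ‖V' y‖ := by rw [norm_eq_sqrt_norm_inner_self (A := A)]; positivity
  have hy : 0 ≤ ‖y‖ := by rw [norm_eq_sqrt_norm_inner_self (A := A)]; positivity
  have hsq : ‖V' y‖ ^ 2 ≤ ‖V' y‖ * ‖y‖ :=
    calc ‖V' y‖ ^ 2 = ‖⟪V (V' y), y⟫_A‖ := by rw [h, norm_sq_eq A]
      _ ≤ ‖V (V' y)‖ * ‖y‖ := norm_inner_le _ _
      _ ≤ ‖V' y‖ * ‖y‖ := mul_le_mul_of_nonneg_right (hV _) hy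
  nlinarith

end norm

end CStarModuleRight

open CStarModuleRight

section piOne

variable {A : Type*} [NonUnitalCStarAlgebra A] [PartialOrder A] [StarOrderedRing A]
variable {G : Type*} [NormedAddCommGroup G] [NormedSpace ℂ G] [SMul Aᵐᵒᵖ G] [CStarModuleRight A G]
variable {H : Type*} [NormedAddCommGroup H] [NormedSpace ℂ H] [SMul Aᵐᵒᵖ H] [CStarModuleRight A H]

lemma le_mu {n : ℕ} (x : Fin n → G) {y : G} (hy : ‖y‖ ≤ 1) :
    √‖∑ i, ⟪x i, y⟫_A * ⟪y, x i⟫_A‖ ≤ mu x := by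
  refine le_ciSup (f := fun y : {y : G // ‖y‖ ≤ 1} => √‖∑ i, ⟪x i, (y : G)⟫_A * ⟪(y : G), x i⟫_A‖)
    ⟨√(∑ i, ‖x i‖ ^ 2), ?_⟩ ⟨y, hy⟩
  rintro - ⟨⟨z, hz⟩, rfl⟩
  refine Real.sqrt_le_sqrt ((norm_sum_le _ _).trans (Finset.sum_le_sum fun i _ => ?_))
  calc ‖⟪x i, z⟫_A * ⟪z, x i⟫_A‖ ≤ ‖⟪x i, z⟫_A‖ * ‖⟪z, x i⟫_A‖ := norm_mul_le _ _
    _ ≤ (‖x i‖ * ‖z‖) * (‖z‖ * ‖x i‖) := by gcongr <;> exact norm_inner_le _ _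
    _ ≤ ‖x i‖ ^ 2 := by nlinarith [mul_le_one₀ hz (norm_nonneg z) hz, sq_nonneg ‖x i‖]

lemma mu_comp_le {V : G → H} {V' : H → G} (h : IsAdjointPair V V') (hV' : ∀ y, ‖V' y‖ ≤ ‖y‖)
    {n : ℕ} (x : Fin n → G) : mu (V ∘ x) ≤ mu x := by
  have : Nonempty {y : H // ‖y‖ ≤ 1} := ⟨⟨0, by simp⟩⟩
  refine ciSup_le fun ⟨y, hy⟩ => ?_
  have hterm : ∀ i, ⟪V (x i), y⟫_A * ⟪y, V (x i)⟫_A = ⟪x i, V' y⟫_A * ⟪V' y, x i⟫_A :=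
    fun i => by rw [h, ← h.symm]
  simpa only [Function.comp_apply, hterm] using le_mu x ((hV' y).trans hy)

lemma piOne_le_of_apply_eq {V : G → H} {V' : H → G} (h : IsAdjointPair V V')
    (hV' : ∀ y, ‖V' y‖ ≤ ‖y‖) {R : G → G} {R' : H → H} (hR : ∀ x, R x = V' (R' (V x))) :
    piOne R ≤ piOne R' := by
  refine iSup_le fun n => iSup_le fun x => iSup_le fun hx => ?_
  have hterm : ∀ i, ⟪R (x i), x i⟫_A = ⟪R' (V (x i)), V (x i)⟫_A := fun i => by rw [hR, h.symm]
  simp only [hterm]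
  exact le_iSup_of_le n <| le_iSup_of_le (V ∘ x) <|
    le_iSup_of_le ((mu_comp_le h hV' x).trans hx) le_rfl

end piOne

theorem piOne_eq_piOne_adjoint_general
    (R : E →L[ℂ] E)
    (R' : E →L[ℂ] E)
    (W : E →L[ℂ] E) (W' : E →L[ℂ] E)
    (hW : ∀ (x y : E), ⟪W x, y⟫_A = ⟪x, W' y⟫_A)
    (hWnorm : ‖W‖ ≤ 1)
    (hW1 : (W.comp (R.comp W')) = R')
    (hW2 : (W'.comp (R'.comp W)) = R) :
    piOne (⇑R) = piOne (⇑R') := by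
  have hWc : ∀ x, ‖W x‖ ≤ ‖x‖ := fun x => by simpa using W.le_of_opNorm_le hWnorm x
  have hW'c : ∀ y, ‖W' y‖ ≤ ‖y‖ := IsAdjointPair.norm_adjoint_apply_le hW hWc
  exact le_antisymm
    (piOne_le_of_apply_eq hW hW'c fun x => (DFunLike.congr_fun hW2 x).symm)
    (piOne_le_of_apply_eq (IsAdjointPair.symm hW) hWc fun x => (DFunLike.congr_fun hW1 x).symm)

/-- If `T : E → E` is adjointable with adjoint `T'`, `R` is a modulus of `T`, `R'` a modulus
of `T*`, and there is an adjointable contraction `W` with `W∘R∘W* = R'` and `W*∘R'∘W = R`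
(as holds for the partial isometry in the polar decomposition of `T`), then
`π̃₁(T) = π̃₁(T*)`. -/
theorem piOne_eq_piOne_adjoint (T : E →L[ℂ] E) (T' : E →L[ℂ] E)
    (hT : ∀ (x y : E), ⟪T x, y⟫_A = ⟪x, T' y⟫_A)
    (R : E →L[ℂ] E)
    (hRsa : ∀ (x y : E), ⟪R x, y⟫_A = ⟪x, R y⟫_A)
    (hRpos : ∀ x : E, 0 ≤ ⟪R x, x⟫_A)
    (hRR : R.comp R = T'.comp T)
    (R' : E →L[ℂ] E)
    (hR'sa : ∀ (x y : E), ⟪R' x, y⟫_A = ⟪x, R' y⟫_A)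
    (hR'pos : ∀ x : E, 0 ≤ ⟪R' x, x⟫_A)
    (hR'R' : R'.comp R' = T.comp T')
    (W : E →L[ℂ] E) (W' : E →L[ℂ] E)
    (hW : ∀ (x y : E), ⟪W x, y⟫_A = ⟪x, W' y⟫_A)
    (hWnorm : ‖W‖ ≤ 1)
    (hW1 : (W.comp (R.comp W')) = R')
    (hW2 : (W'.comp (R'.comp W)) = R) :
    piOne (⇑R) = piOne (⇑R') :=
  piOne_eq_piOne_adjoint_general R R' W W' hW hWnorm hW1 hW2
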